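/- Let k ≥ 2 be an even integer and G an even polynomial with real coefficients of degree ≥ 2 satisfying G(0) = 1 and G(−1) = G(−2) = 0, and let T be the associated contour integral. Then for every real j > 0 there exists a constant C > 0, depending only on j, k and G, such that |T(y)| ≤ C·y^{−j} for all real y ≥ 1. -/

import Mathlib

/-!
The integrand `Γ(s + k/2) G(s) y^{-s} / s` is holomorphic on `Re s > 0`, and on every vertical
strip `1 ≤ Re s ≤ σ` it is `O(y^{-Re s} / (1 + t²))`: iterating `Γ(s + 1) = s Γ(s)` gives
`|Γ(s)| ≤ Γ(Re s + n) / |Im s|ⁿ`, which beats the polynomial growth of `G(s)`. Cauchy's theorem on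
tall rectangles therefore moves the line of integration from `Re s = 2` to `Re s = max 2 j`,
where the integral is `O(y^{-max 2 j}) = O(y^{-j})` for `y ≥ 1`.
-/

/-- `T(y) = (1/2πi) ∫_{(2)} (Γ(s+k/2)/Γ(k/2)) G(s) y^{-s} ds/s`,
written as an integral over the vertical line `s = 2 + it`. -/
noncomputable def Tint (k : ℕ) (G : Polynomial ℝ) (y : ℝ) : ℂ :=
  (1 / (2 * Real.pi) : ℂ) * ∫ t : ℝ,
    Complex.Gamma ((2 + (t : ℂ) * Complex.I) + (k : ℂ) / 2) / Complex.Gamma ((k : ℂ) / 2) *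
      Polynomial.aeval (2 + (t : ℂ) * Complex.I) G *
      (y : ℂ) ^ (-(2 + (t : ℂ) * Complex.I)) / (2 + (t : ℂ) * Complex.I)

open MeasureTheory Set Filter Topology Complex Polynomial
open scoped Interval

section DecayOnLine

variable {E : Type*} [NormedAddCommGroup E] {f : ℝ → E} {C : ℝ}

lemma integrable_of_norm_le_div_one_add_sq (hf : AEStronglyMeasurable f)
    (hC : ∀ t, ‖f t‖ ≤ C / (1 + t ^ 2)) : Integrable f :=
  (integrable_inv_one_add_sq.const_mul C).mono' hf
    (.of_forall fun t => (hC t).trans_eq (div_eq_mul_inv _ _))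

lemma norm_integral_le_mul_pi_of_norm_le_div_one_add_sq [NormedSpace ℝ E]
    (hC : ∀ t, ‖f t‖ ≤ C / (1 + t ^ 2)) : ‖∫ t, f t‖ ≤ C * Real.pi :=
  calc ‖∫ t, f t‖ ≤ ∫ t : ℝ, C * (1 + t ^ 2)⁻¹ :=
        norm_integral_le_of_norm_le (integrable_inv_one_add_sq.const_mul C)
          (.of_forall fun t => (hC t).trans_eq (div_eq_mul_inv _ _))
    _ = C * Real.pi := by rw [integral_const_mul, integral_univ_inv_one_add_sq]

end DecayOnLine

namespace Complex

variable {E : Type*} [NormedAddCommGroup E] [NormedSpace ℂ E]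

lemma integral_horizontal_sub_integral_horizontal_eq {f : ℂ → E} {a b : ℝ} (T : ℝ)
    (hf : DifferentiableOn ℂ f (re ⁻¹' [[a, b]])) :
    (∫ x in a..b, f (x + T * I)) - (∫ x in a..b, f (x + (-T : ℝ) * I)) =
      I • ((∫ t in -T..T, f (b + t * I)) - ∫ t in -T..T, f (a + t * I)) := by
  have h := integral_boundary_rect_eq_zero_of_differentiableOn f (a + (-T : ℝ) * I) (b + T * I)
    (hf.mono fun z hz => by simpa using hz.1)
  simp only [add_re, ofReal_re, mul_re, I_re, mul_zero, ofReal_im, I_im, mul_one, sub_self,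
    add_zero, add_im, mul_im, zero_add] at h
  linear_combination (norm := module) -h

theorem integral_vertical_eq_of_norm_le_div_one_add_sq {f : ℂ → E} {a b C : ℝ}
    (hf : DifferentiableOn ℂ f (re ⁻¹' [[a, b]]))
    (hC : ∀ x ∈ [[a, b]], ∀ t : ℝ, ‖f (x + t * I)‖ ≤ C / (1 + t ^ 2)) :
    ∫ t : ℝ, f (a + t * I) = ∫ t : ℝ, f (b + t * I) := by
  have hline : ∀ x ∈ [[a, b]], Integrable fun t : ℝ => f (x + t * I) := fun x hx =>
    integrable_of_norm_le_div_one_add_sq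
      (hf.continuousOn.comp_continuous (by fun_prop) fun t => by
        simpa using hx).aestronglyMeasurable
      (hC x hx)
  have hlim : ∀ x ∈ [[a, b]], Tendsto (fun T : ℝ => ∫ t in -T..T, f (x + t * I)) atTop
      (𝓝 (∫ t : ℝ, f (x + t * I))) := fun x hx =>
    intervalIntegral_tendsto_integral (hline x hx) tendsto_neg_atTop_atBot tendsto_id
  have hhoriz (u : ℝ) : ‖∫ x in a..b, f (x + u * I)‖ ≤ C / (1 + u ^ 2) * |b - a| :=
    intervalIntegral.norm_integral_le_of_norm_le_const fun x hx => hC x (uIoc_subset_uIcc hx) u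
  have hdiff : Tendsto (fun T : ℝ =>
      (∫ t in -T..T, f (b + t * I)) - ∫ t in -T..T, f (a + t * I)) atTop (𝓝 0) := by
    have hdecay : Tendsto (fun T : ℝ => 2 * (C / (1 + T ^ 2) * |b - a|)) atTop (𝓝 0) := by
      have h := (((tendsto_const_nhds (x := C)).div_atTop (tendsto_atTop_add_const_left _ 1
        (tendsto_pow_atTop two_ne_zero))).mul_const |b - a|).const_mul 2
      simpa using h
    refine squeeze_zero_norm (fun T => ?_) hdecay
    have hrect := congrArg norm (integral_horizontal_sub_integral_horizontal_eq T hf)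
    rw [norm_smul, norm_I, one_mul] at hrect
    rw [← hrect, two_mul]
    refine (norm_sub_le _ _).trans (add_le_add (hhoriz T) ?_)
    simpa using hhoriz (-T)
  exact (sub_eq_zero.mp (tendsto_nhds_unique
    ((hlim b right_mem_uIcc).sub (hlim a left_mem_uIcc)) hdiff)).symm

lemma norm_Gamma_le_Gamma_re {s : ℂ} (hs : 0 < s.re) : ‖Gamma s‖ ≤ Real.Gamma s.re := by
  rw [Gamma_eq_integral hs, Real.Gamma_eq_integral hs, GammaIntegral]
  refine (norm_integral_le_integral_norm _).trans_eq
    (setIntegral_congr_fun measurableSet_Ioi fun x hx => ?_)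
  rw [norm_mul, norm_real, Real.norm_of_nonneg (Real.exp_pos _).le,
    norm_cpow_eq_rpow_re_of_pos hx, sub_re, one_re]

lemma norm_Gamma_mul_max_one_abs_im_pow_le (n : ℕ) {s : ℂ} (hs : 1 ≤ s.re) :
    ‖Gamma s‖ * max 1 |s.im| ^ n ≤ Real.Gamma (s.re + n) := by
  induction n generalizing s with
  | zero => simpa using norm_Gamma_le_Gamma_re (by linarith)
  | succ n ih =>
    have hs0 : s ≠ 0 := by rintro rfl; norm_num at hs
    have hM : max 1 |s.im| ≤ ‖s‖ := max_le (hs.trans (re_le_norm s)) (abs_im_le_norm s)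
    calc ‖Gamma s‖ * max 1 |s.im| ^ (n + 1) ≤ ‖Gamma s‖ * ‖s‖ * max 1 |s.im| ^ n := by
          rw [pow_succ, mul_comm _ (max 1 |s.im|), ← mul_assoc]; gcongr
      _ = ‖Gamma (s + 1)‖ * max 1 |(s + 1).im| ^ n := by
          rw [Gamma_add_one s hs0, norm_mul, mul_comm ‖s‖, add_im, one_im, add_zero]
      _ ≤ Real.Gamma ((s + 1).re + n) := ih (by rw [add_re, one_re]; linarith)
      _ = Real.Gamma (s.re + (n + 1 : ℕ)) := by rw [add_re, one_re]; push_cast; ring_nf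

end Complex

lemma Polynomial.norm_aeval_le (G : ℝ[X]) (s : ℂ) :
    ‖aeval s G‖ ≤
      (∑ i ∈ Finset.range (G.natDegree + 1), |G.coeff i|) * max 1 ‖s‖ ^ G.natDegree := by
  rw [aeval_eq_sum_range, Finset.sum_mul]
  refine (norm_sum_le _ _).trans (Finset.sum_le_sum fun i hi => ?_)
  rw [norm_smul, Real.norm_eq_abs, norm_pow]
  gcongr
  calc ‖s‖ ^ i ≤ max 1 ‖s‖ ^ i := by gcongr; exact le_max_right _ _
    _ ≤ max 1 ‖s‖ ^ G.natDegree :=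
        pow_le_pow_right₀ (le_max_left _ _) (Finset.mem_range_succ_iff.mp hi)

noncomputable def Tintegrand (k : ℕ) (G : ℝ[X]) (y : ℝ) (s : ℂ) : ℂ :=
  Gamma (s + (k : ℂ) / 2) / Gamma ((k : ℂ) / 2) * aeval s G * (y : ℂ) ^ (-s) / s

lemma Tint_eq_integral_Tintegrand (k : ℕ) (G : ℝ[X]) (y : ℝ) :
    Tint k G y = (1 / (2 * Real.pi) : ℂ) * ∫ t : ℝ, Tintegrand k G y (2 + t * I) :=
  rfl

lemma differentiableOn_Tintegrand (k : ℕ) (G : ℝ[X]) {y : ℝ} (hy : 0 < y) :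
    DifferentiableOn ℂ (Tintegrand k G y) {s | 0 < s.re} := by
  intro s (hs : 0 < s.re)
  have hpole (m : ℕ) : s + (k : ℂ) / 2 ≠ -m := fun h => by
    have h' := congrArg re h
    simp only [add_re, div_ofNat_re, natCast_re, neg_re] at h'
    linarith [(k.cast_nonneg : (0 : ℝ) ≤ k), (m.cast_nonneg : (0 : ℝ) ≤ m)]
  have hs0 : s ≠ 0 := by rintro rfl; simp at hs
  refine DifferentiableAt.differentiableWithinAt ?_
  exact (((((differentiableAt_Gamma _ hpole).comp s (differentiableAt_id.add_const _)).div_const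
    _).mul (G.differentiable_aeval s)).mul ((differentiableAt_id.neg).const_cpow
      (Or.inl (ofReal_ne_zero.mpr hy.ne')))).div differentiableAt_id hs0

lemma exists_norm_Tintegrand_le (k : ℕ) (G : ℝ[X]) {σ : ℝ} (hσ : 1 ≤ σ) :
    ∃ K, 0 ≤ K ∧ ∀ y > 0, ∀ x ∈ Icc 1 σ, ∀ t : ℝ,
      ‖Tintegrand k G y (x + t * I)‖ ≤ K * y ^ (-x) / (1 + t ^ 2) := by
  set d := G.natDegree
  set B := ∑ i ∈ Finset.range (d + 1), |G.coeff i|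
  set Γσ := Real.Gamma (σ + k / 2 + (d + 2 : ℕ))
  have hB : 0 ≤ B := Finset.sum_nonneg fun i _ => abs_nonneg _
  have hΓσ : 0 < Γσ := Real.Gamma_pos_of_pos (by positivity)
  refine ⟨‖Gamma (k / 2)‖⁻¹ * (2 * Γσ * (B * (σ + 1) ^ d)), by positivity, ?_⟩
  rintro y hy x ⟨hx1, hxσ⟩ t
  set s : ℂ := x + t * I
  set M := max 1 |t|
  have hM : 1 ≤ M := le_max_left _ _
  have hs_re : s.re = x := by simp [s]
  have hs1 : 1 ≤ ‖s‖ := hx1.trans (hs_re ▸ re_le_norm s)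
  have hΓ : ‖Gamma (s + k / 2)‖ * M ^ (d + 2) ≤ Γσ := by
    have hre : (s + k / 2).re = x + k / 2 := by simp [s]
    have him : (s + k / 2).im = t := by simp [s]
    have h := norm_Gamma_mul_max_one_abs_im_pow_le (d + 2) (s := s + k / 2)
      (by rw [hre]; linarith [(k.cast_nonneg : (0 : ℝ) ≤ k)])
    rw [hre, him] at h
    refine h.trans (Real.Gamma_strictMonoOn_Ici.monotoneOn ?_ ?_ (by gcongr))
    all_goals rw [mem_Ici]; push_cast; linarith [(k.cast_nonneg : (0 : ℝ) ≤ k)]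
  have hpoly : ‖aeval s G‖ ≤ B * ((σ + 1) ^ d * M ^ d) := by
    refine (G.norm_aeval_le s).trans (mul_le_mul_of_nonneg_left ?_ hB)
    rw [← mul_pow]
    gcongr
    refine max_le (by nlinarith) ?_
    calc ‖s‖ ≤ ‖(x : ℂ)‖ + ‖(t : ℂ) * I‖ := norm_add_le _ _
      _ = |x| + |t| := by simp
      _ ≤ (σ + 1) * M := by
          rw [abs_of_pos (by linarith)]
          nlinarith [le_max_right 1 |t|]
  have ht : 1 + t ^ 2 ≤ 2 * M ^ 2 := by
    have htM : t ^ 2 ≤ M ^ 2 := sq_abs t ▸ pow_le_pow_left₀ (abs_nonneg t) (le_max_right _ _) 2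
    linarith [one_le_pow₀ (n := 2) hM]
  have hcore : ‖Gamma (s + k / 2)‖ * ‖aeval s G‖ * (1 + t ^ 2) ≤ 2 * Γσ * (B * (σ + 1) ^ d) :=
    calc ‖Gamma (s + k / 2)‖ * ‖aeval s G‖ * (1 + t ^ 2)
        ≤ ‖Gamma (s + k / 2)‖ * (B * ((σ + 1) ^ d * M ^ d)) * (2 * M ^ 2) := by gcongr
      _ = 2 * (B * (σ + 1) ^ d) * (‖Gamma (s + k / 2)‖ * M ^ (d + 2)) := by ring
      _ ≤ 2 * (B * (σ + 1) ^ d) * Γσ := by gcongr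
      _ = 2 * Γσ * (B * (σ + 1) ^ d) := by ring
  rw [le_div_iff₀ (by positivity)]
  calc ‖Tintegrand k G y s‖ * (1 + t ^ 2)
      = ‖Gamma (k / 2)‖⁻¹ * (‖Gamma (s + k / 2)‖ * ‖aeval s G‖ * (1 + t ^ 2)) * y ^ (-x)
          * ‖s‖⁻¹ := by
        simp only [Tintegrand, norm_div, norm_mul, norm_cpow_eq_rpow_re_of_pos hy, neg_re, hs_re]
        ring
    _ ≤ ‖Gamma (k / 2)‖⁻¹ * (2 * Γσ * (B * (σ + 1) ^ d)) * y ^ (-x) * 1 := by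
        gcongr
        exact inv_le_one_of_one_le₀ hs1
    _ = _ := mul_one _

theorem stmt_9_general (k : ℕ) (G : Polynomial ℝ) :
    ∀ j : ℝ, 0 < j → ∃ C : ℝ, 0 < C ∧ ∀ y : ℝ, 1 ≤ y →
      ‖Tint k G y‖ ≤ C * y ^ (-j) := by
  intro j _
  set σ := max 2 j
  have hσ : 2 ≤ σ := le_max_left 2 j
  obtain ⟨K, hK0, hK⟩ := exists_norm_Tintegrand_le k G (by linarith : (1 : ℝ) ≤ σ)
  refine ⟨K + 1, by positivity, fun y hy => ?_⟩
  have hy0 : 0 < y := by linarith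
  have hshift :
      ∫ t : ℝ, Tintegrand k G y (2 + t * I) = ∫ t : ℝ, Tintegrand k G y (σ + t * I) := by
    have h := integral_vertical_eq_of_norm_le_div_one_add_sq (a := 2) (b := σ) (C := K)
      ((differentiableOn_Tintegrand k G hy0).mono fun s hs => by
        rw [uIcc_of_le hσ] at hs; exact lt_of_lt_of_le two_pos hs.1)
      fun x hx t => by
        rw [uIcc_of_le hσ] at hx
        refine (hK y hy0 x ⟨by linarith [hx.1], hx.2⟩ t).trans ?_
        gcongr
        exact mul_le_of_le_one_right hK0
          (Real.rpow_le_one_of_one_le_of_nonpos hy (by linarith [hx.1]))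
    simpa using h
  have hσline : ‖∫ t : ℝ, Tintegrand k G y (σ + t * I)‖ ≤ K * y ^ (-σ) * Real.pi :=
    norm_integral_le_mul_pi_of_norm_le_div_one_add_sq (hK y hy0 σ ⟨by linarith, le_rfl⟩)
  calc ‖Tint k G y‖ = ‖∫ t : ℝ, Tintegrand k G y (σ + t * I)‖ / (2 * Real.pi) := by
        rw [Tint_eq_integral_Tintegrand, hshift, norm_mul, one_div, norm_inv, norm_mul,
          norm_real, Real.norm_of_nonneg Real.pi_pos.le, Complex.norm_two, inv_mul_eq_div]
    _ ≤ K * y ^ (-σ) * Real.pi / (2 * Real.pi) := by gcongr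
    _ = K / 2 * y ^ (-σ) := by field_simp
    _ ≤ (K + 1) * y ^ (-j) := by
        gcongr
        · linarith
        · exact le_max_right 2 j

/-- `T(y) ≪_{j,k} y^{-j}` as `y → ∞`. -/
theorem stmt_9 (k : ℕ) (hk : 2 ≤ k) (hke : Even k) (G : Polynomial ℝ)
    (hdeg : 2 ≤ G.natDegree) (heven : ∀ x : ℝ, G.eval (-x) = G.eval x)
    (h0 : G.eval 0 = 1) (h1 : G.eval (-1) = 0) (h2 : G.eval (-2) = 0) :
    ∀ j : ℝ, 0 < j → ∃ C : ℝ, 0 < C ∧ ∀ y : ℝ, 1 ≤ y →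
      ‖Tint k G y‖ ≤ C * y ^ (-j) :=
  stmt_9_general k G
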